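/- arXiv:1311.7034 — 6 statements merged into one kernel-verified Lean document; each statement's English description precedes it below -/
import Mathlib

section
/- With g, φ, c as above, let u : [0,∞) → (0,∞) be continuous non-increasing with φ(x) = x·u(x), and define v = u ∘ g⁻¹ and ψ(x) = x·v(x). Then for all x > 0, ψ(x) = φ(g⁻¹(x))/(1 − c·φ(g⁻¹(x))). Consequently ψ is increasing, nonnegative, and ψ(x) → φ_∞/(1 − c·φ_∞) as x → ∞. -/
/-!
Writing `y = g⁻¹(x)`, the relation `x = g(y) = y / (1 - c φ(y))` turns `ψ(x) = x u(y)` into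
`φ(y) / (1 - c φ(y))`. Hence `ψ` is the composite of `t ↦ t / (1 - c t)`, increasing where
`c t < 1`, with `φ` and `g⁻¹`, both increasing, and `g⁻¹ → ∞` because `g` is monotone.
Nonnegativity follows from `ψ(0) = 0`, and the limit from continuity of `t ↦ t / (1 - c t)`
at `φ_∞`.
-/

open Filter Set

theorem StrictMonoOn.lt_of_tendsto_atTop {α β : Type*} [LinearOrder α] [NoMaxOrder α]
    [TopologicalSpace β] [LinearOrder β] [OrderClosedTopology β] {f : α → β} {a : α} {L : β}
    (hf : StrictMonoOn f (Ici a)) (hlim : Tendsto f atTop (nhds L)) {x : α} (hx : a ≤ x) :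
    f x < L := by
  have : Nonempty α := ⟨a⟩
  obtain ⟨y, hxy⟩ := exists_gt x
  have hyL : f y ≤ L :=
    ge_of_tendsto hlim <| (eventually_ge_atTop y).mono fun t hyt =>
      hf.monotoneOn (hx.trans hxy.le) (hx.trans (hxy.le.trans hyt)) hyt
  exact (hf hx (hx.trans hxy.le) hxy).trans_le hyL

section RightInverse

variable {α β : Type*} [LinearOrder α] [LinearOrder β] {g : α → β} {ginv : β → α}
  {s : Set α} {t : Set β}

theorem MonotoneOn.strictMonoOn_of_rightInvOn (hg : MonotoneOn g s) (hmaps : MapsTo ginv t s)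
    (hinv : RightInvOn ginv g t) : StrictMonoOn ginv t := by
  intro a ha b hb hab
  by_contra! hba
  have := hg (hmaps hb) (hmaps ha) hba
  rw [hinv ha, hinv hb] at this
  exact hab.not_ge this

theorem MonotoneOn.tendsto_atTop_of_rightInvOn [NoMaxOrder β] {a : α} {b : β}
    (hg : MonotoneOn g (Ici a)) (hmaps : MapsTo ginv (Ici b) (Ici a))
    (hinv : RightInvOn ginv g (Ici b)) : Tendsto ginv atTop atTop := by
  have : Nonempty β := ⟨b⟩
  refine tendsto_atTop_atTop.2 fun y => ?_
  obtain ⟨z, hz⟩ := exists_gt (g (max y a))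
  refine ⟨max b z, fun x hx => ?_⟩
  have hxb : x ∈ Ici b := le_of_max_le_left hx
  by_contra! hlt
  have := hg (hmaps hxb) (le_max_right y a) (hlt.trans_le (le_max_left y a)).le
  rw [hinv hxb] at this
  exact (this.trans_lt hz).not_ge (le_of_max_le_right hx)

end RightInverse

theorem strictMonoOn_div_one_sub_mul (c : ℝ) :
    StrictMonoOn (fun t => t / (1 - c * t)) {t | c * t < 1} := by
  intro a (ha : c * a < 1) b (hb : c * b < 1) hab
  rw [div_lt_div_iff₀ (sub_pos.2 ha) (sub_pos.2 hb)]
  nlinarith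

theorem stmt_1_general (c φinf : ℝ) (u φ g ginv v ψ : ℝ → ℝ)
    (hc0 : 0 < c)
    (hφ : ∀ x ∈ Set.Ici (0:ℝ), φ x = x * u x)
    (hφmono : StrictMonoOn φ (Set.Ici 0))
    (hφlim : Tendsto φ atTop (nhds φinf))
    (hcφ : c * φinf < 1)
    (hgdef : ∀ x ∈ Set.Ici (0:ℝ), g x = x / (1 - c * φ x))
    (hginv : ∀ x ∈ Set.Ici (0:ℝ), g (ginv x) = x ∧ ginv x ∈ Set.Ici (0:ℝ))
    (hv : ∀ x ∈ Set.Ici (0:ℝ), v x = u (ginv x))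
    (hψ : ∀ x ∈ Set.Ici (0:ℝ), ψ x = x * v x) :
    (∀ x > (0:ℝ), ψ x = φ (ginv x) / (1 - c * φ (ginv x))) ∧
      StrictMonoOn ψ (Set.Ici 0) ∧ (∀ x ∈ Set.Ici (0:ℝ), 0 ≤ ψ x) ∧
      Tendsto ψ atTop (nhds (φinf / (1 - c * φinf))) := by
  have hden : MapsTo φ (Ici 0) {t | c * t < 1} := fun x hx =>
    (mul_lt_mul_of_pos_left (hφmono.lt_of_tendsto_atTop hφlim hx) hc0).trans hcφ
  have hgmono : MonotoneOn g (Ici 0) := fun a ha b hb hab => by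
    rw [hgdef a ha, hgdef b hb]
    refine div_le_div₀ hb hab (sub_pos.2 (hden hb)) ?_
    nlinarith [hφmono.monotoneOn ha hb hab]
  have hmaps : MapsTo ginv (Ici 0) (Ici 0) := fun x hx => (hginv x hx).2
  have hinv : RightInvOn ginv g (Ici 0) := fun x hx => (hginv x hx).1
  have hkey : EqOn ψ ((fun t => t / (1 - c * t)) ∘ φ ∘ ginv) (Ici 0) := fun x hx =>
    calc ψ x = x * u (ginv x) := by rw [hψ x hx, hv x hx]
      _ = g (ginv x) * u (ginv x) := by rw [hinv hx]
      _ = φ (ginv x) / (1 - c * φ (ginv x)) := by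
        rw [hgdef _ (hmaps hx), div_mul_eq_mul_div, ← hφ _ (hmaps hx)]
  have hψmono : StrictMonoOn ψ (Ici 0) :=
    ((strictMonoOn_div_one_sub_mul c).comp
      (hφmono.comp (hgmono.strictMonoOn_of_rightInvOn hmaps hinv) hmaps)
      (hden.comp hmaps)).congr hkey.symm
  refine ⟨fun x hx => hkey hx.le, hψmono, fun x hx => ?_, ?_⟩
  · calc 0 = ψ 0 := by rw [hψ 0 self_mem_Ici, zero_mul]
      _ ≤ ψ x := hψmono.monotoneOn self_mem_Ici hx hx
  · have hcont : ContinuousAt (fun t => t / (1 - c * t)) φinf :=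
      continuousAt_id.div (continuousAt_const.sub (continuousAt_const.mul continuousAt_id))
        (sub_pos.2 hcφ).ne'
    refine (hcont.tendsto.comp
      (hφlim.comp (hgmono.tendsto_atTop_of_rightInvOn hmaps hinv))).congr' ?_
    filter_upwards [eventually_ge_atTop 0] with x hx using (hkey hx).symm

/-- with v = u ∘ g⁻¹ and ψ(x) = x·v(x), for x > 0 one has
ψ(x) = φ(g⁻¹(x))/(1 − c·φ(g⁻¹(x))); ψ is increasing, nonnegative, and
ψ(x) → φ_∞/(1 − c·φ_∞) as x → ∞. -/
theorem stmt_1 (c φinf : ℝ) (u φ g ginv v ψ : ℝ → ℝ)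
    (hc0 : 0 < c) (hc1 : c < 1)
    (hu : ContinuousOn u (Set.Ici 0)) (hupos : ∀ x ∈ Set.Ici (0:ℝ), 0 < u x)
    (humono : AntitoneOn u (Set.Ici 0))
    (hφ : ∀ x ∈ Set.Ici (0:ℝ), φ x = x * u x)
    (hφmono : StrictMonoOn φ (Set.Ici 0))
    (hφlim : Tendsto φ atTop (nhds φinf)) (hφinf : 1 < φinf)
    (hcφ : c * φinf < 1)
    (hgdef : ∀ x ∈ Set.Ici (0:ℝ), g x = x / (1 - c * φ x))
    (hgbij : Set.BijOn g (Set.Ici 0) (Set.Ici 0))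
    (hginv : ∀ x ∈ Set.Ici (0:ℝ), g (ginv x) = x ∧ ginv x ∈ Set.Ici (0:ℝ))
    (hv : ∀ x ∈ Set.Ici (0:ℝ), v x = u (ginv x))
    (hψ : ∀ x ∈ Set.Ici (0:ℝ), ψ x = x * v x) :
    (∀ x > (0:ℝ), ψ x = φ (ginv x) / (1 - c * φ (ginv x))) ∧
      StrictMonoOn ψ (Set.Ici 0) ∧ (∀ x ∈ Set.Ici (0:ℝ), 0 ≤ ψ x) ∧
      Tendsto ψ atTop (nhds (φinf / (1 - c * φinf))) :=
  stmt_1_general c φinf u φ g ginv v ψ hc0 hφ hφmono hφlim hcφ hgdef hginv hv hψ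
end

section
/- Let v ∈ ℂ^N, let A and B be N×N Hermitian nonnegative definite matrices, and let x > 0. Then |tr(B·(A + v·v* + x·I_N)⁻¹) − tr(B·(A + x·I_N)⁻¹)| ≤ ‖B‖ / x, where ‖B‖ is the spectral (operator) norm of B. -/
/-!
Write `C = A + x I`, which is positive definite. By the Sherman–Morrison formula, with `w = C⁻¹ v`,
the difference of the two traces is `-(w* B w) / (1 + w* C w)`. Its numerator is at most
`‖B‖ ‖w‖²` in absolute value, while `w* C w = w* A w + x ‖w‖² ≥ x ‖w‖²`, so the quotient is at
most `‖B‖ ‖w‖² / (1 + x ‖w‖²) ≤ ‖B‖ / x`.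
-/

open Matrix
open scoped ComplexOrder

namespace Matrix

variable {n : Type*} [Fintype n]

theorem inv_add_vecMulVec {K : Type*} [DecidableEq n] [Field K] {C : Matrix n n K}
    (hC : IsUnit C.det) (u v : n → K) (h : 1 + v ⬝ᵥ (C⁻¹ *ᵥ u) ≠ 0) :
    (C + vecMulVec u v)⁻¹
      = C⁻¹ - (1 + v ⬝ᵥ (C⁻¹ *ᵥ u))⁻¹ • vecMulVec (C⁻¹ *ᵥ u) (v ᵥ* C⁻¹) := by
  refine inv_eq_right_inv ?_
  have hC' : (C + vecMulVec u v) * C⁻¹ = 1 + vecMulVec u (v ᵥ* C⁻¹) := by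
    rw [add_mul, mul_nonsing_inv _ hC, vecMulVec_mul]
  have hP : (C + vecMulVec u v) * vecMulVec (C⁻¹ *ᵥ u) (v ᵥ* C⁻¹)
      = (1 + v ⬝ᵥ (C⁻¹ *ᵥ u)) • vecMulVec u (v ᵥ* C⁻¹) := by
    rw [mul_vecMulVec, add_mulVec, mulVec_mulVec, mul_nonsing_inv _ hC, one_mulVec,
      vecMulVec_mulVec, op_smul_eq_smul, ← smul_vecMulVec, add_smul, one_smul]
  rw [Matrix.mul_sub, hC', Matrix.mul_smul, hP, smul_smul, inv_mul_cancel₀ h, one_smul,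
    add_sub_cancel_right]

theorem trace_mul_vecMulVec {R : Type*} [CommSemiring R] (B : Matrix n n R) (a b : n → R) :
    (B * vecMulVec a b).trace = b ⬝ᵥ (B *ᵥ a) := by
  rw [mul_vecMulVec, trace_vecMulVec, dotProduct_comm]

variable {𝕜 : Type*} [RCLike 𝕜]

theorem star_dotProduct_self_eq_norm_sq (w : n → 𝕜) :
    star w ⬝ᵥ w = ((‖WithLp.toLp 2 w‖ ^ 2 : ℝ) : 𝕜) := by
  rw [RCLike.ofReal_pow, ← inner_self_eq_norm_sq_to_K (𝕜 := 𝕜), EuclideanSpace.inner_toLp_toLp,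
    dotProduct_comm]

theorem norm_star_dotProduct_mulVec_le [DecidableEq n] (B : Matrix n n 𝕜) (w : n → 𝕜) :
    ‖star w ⬝ᵥ (B *ᵥ w)‖ ≤ ‖toEuclideanCLM (𝕜 := 𝕜) B‖ * ‖WithLp.toLp 2 w‖ ^ 2 := by
  set T := toEuclideanCLM (𝕜 := 𝕜) B
  set w' := WithLp.toLp 2 w
  have hinner : star w ⬝ᵥ (B *ᵥ w) = inner 𝕜 w' (T w') := by
    rw [dotProduct_comm]
    rfl
  calc ‖star w ⬝ᵥ (B *ᵥ w)‖ ≤ ‖w'‖ * ‖T w'‖ := hinner ▸ norm_inner_le_norm _ _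
    _ ≤ ‖w'‖ * (‖T‖ * ‖w'‖) := by gcongr; exact T.le_opNorm w'
    _ = ‖T‖ * ‖w'‖ ^ 2 := by ring

theorem PosSemidef.mul_norm_sq_le_star_dotProduct_add_smul_one_mulVec [DecidableEq n]
    {A : Matrix n n 𝕜} (hA : A.PosSemidef) (x : ℝ) (w : n → 𝕜) :
    ((x * ‖WithLp.toLp 2 w‖ ^ 2 : ℝ) : 𝕜) ≤ star w ⬝ᵥ ((A + (x : 𝕜) • 1) *ᵥ w) := by
  rw [add_mulVec, dotProduct_add, smul_mulVec, one_mulVec, dotProduct_smul,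
    star_dotProduct_self_eq_norm_sq, smul_eq_mul, ← RCLike.ofReal_mul]
  exact le_add_of_nonneg_left (hA.dotProduct_mulVec_nonneg w)

theorem PosDef.trace_mul_inv_add_vecMulVec_star_sub [DecidableEq n] {C : Matrix n n 𝕜}
    (hC : C.PosDef) (B : Matrix n n 𝕜) {v w : n → 𝕜} (hw : C *ᵥ w = v) :
    (B * (C + vecMulVec v (star v))⁻¹).trace - (B * C⁻¹).trace
      = -((1 + star w ⬝ᵥ (C *ᵥ w))⁻¹ * (star w ⬝ᵥ (B *ᵥ w))) := by
  subst hw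
  have hdet : IsUnit C.det := (isUnit_iff_isUnit_det C).mp hC.isUnit
  have hCw : C⁻¹ *ᵥ (C *ᵥ w) = w := by
    rw [mulVec_mulVec, nonsing_inv_mul _ hdet, one_mulVec]
  have hstar : star (C *ᵥ w) ᵥ* C⁻¹ = star w := by
    rw [star_mulVec, hC.isHermitian.eq, vecMul_vecMul, mul_nonsing_inv _ hdet, vecMul_one]
  have hα : star (C *ᵥ w) ⬝ᵥ (C⁻¹ *ᵥ (C *ᵥ w)) = star w ⬝ᵥ (C *ᵥ w) := by
    rw [dotProduct_mulVec, hstar]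
  have hα_ne : 1 + star w ⬝ᵥ (C *ᵥ w) ≠ 0 :=
    (add_pos_of_pos_of_nonneg one_pos (hC.posSemidef.dotProduct_mulVec_nonneg w)).ne'
  rw [← trace_sub, ← Matrix.mul_sub, inv_add_vecMulVec hdet _ _ (hα ▸ hα_ne), hα, hCw, hstar,
    sub_sub_cancel_left, Matrix.mul_neg, trace_neg, Matrix.mul_smul, trace_smul,
    trace_mul_vecMulVec, smul_eq_mul]

end Matrix

theorem RCLike.norm_inv_one_add_mul_le_div {𝕜 : Type*} [RCLike 𝕜] {α β : 𝕜} {s b x : ℝ}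
    (hx : 0 < x) (hs : 0 ≤ s) (hb : 0 ≤ b) (hα : ((x * s : ℝ) : 𝕜) ≤ α) (hβ : ‖β‖ ≤ b * s) :
    ‖(1 + α)⁻¹ * β‖ ≤ b / x := by
  obtain ⟨a, ha, rfl⟩ := RCLike.nonneg_iff_exists_ofReal.mp
    ((RCLike.ofReal_nonneg.mpr (mul_nonneg hx.le hs)).trans hα)
  have hxs : x * s ≤ a := RCLike.ofReal_le_ofReal.mp hα
  have hnorm : ‖(1 + (a : 𝕜))‖ = 1 + a := by
    rw [← RCLike.ofReal_one, ← RCLike.ofReal_add, RCLike.norm_ofReal, abs_of_pos (by linarith)]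
  rw [norm_mul, norm_inv, hnorm, inv_mul_eq_div, div_le_div_iff₀ (by linarith) hx]
  nlinarith

theorem stmt_6_general (N : ℕ) (A B : Matrix (Fin N) (Fin N) ℂ) (v : Fin N → ℂ) (x : ℝ)
    (hx : 0 < x) (hA : A.PosSemidef) :
    ‖(B * (A + vecMulVec v (star v) + (x:ℂ) • (1 : Matrix (Fin N) (Fin N) ℂ))⁻¹).trace
        - (B * (A + (x:ℂ) • (1 : Matrix (Fin N) (Fin N) ℂ))⁻¹).trace‖
      ≤ ‖Matrix.toEuclideanCLM (𝕜 := ℂ) B‖ / x := by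
  set C := A + (x:ℂ) • (1 : Matrix (Fin N) (Fin N) ℂ)
  have hC : C.PosDef := PosDef.posSemidef_add hA (PosDef.one.smul (Complex.zero_lt_real.mpr hx))
  set w := C⁻¹ *ᵥ v
  have hw : C *ᵥ w = v := by
    rw [mulVec_mulVec, mul_nonsing_inv _ ((isUnit_iff_isUnit_det C).mp hC.isUnit), one_mulVec]
  rw [add_right_comm, hC.trace_mul_inv_add_vecMulVec_star_sub B hw, norm_neg]
  exact RCLike.norm_inv_one_add_mul_le_div hx (sq_nonneg _) (norm_nonneg _)
    (hA.mul_norm_sq_le_star_dotProduct_add_smul_one_mulVec x w)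
    (norm_star_dotProduct_mulVec_le B w)

/-- rank-one perturbation lemma:
|tr(B(A + vv* + xI)⁻¹) − tr(B(A + xI)⁻¹)| ≤ ‖B‖/x, ‖B‖ the spectral norm. -/
theorem stmt_6 (N : ℕ) (A B : Matrix (Fin N) (Fin N) ℂ) (v : Fin N → ℂ) (x : ℝ)
    (hx : 0 < x) (hA : A.PosSemidef) (hB : B.PosSemidef) :
    ‖(B * (A + vecMulVec v (star v) + (x:ℂ) • (1 : Matrix (Fin N) (Fin N) ℂ))⁻¹).trace
        - (B * (A + (x:ℂ) • (1 : Matrix (Fin N) (Fin N) ℂ))⁻¹).trace‖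
      ≤ ‖Matrix.toEuclideanCLM (𝕜 := ℂ) B‖ / x :=
  stmt_6_general N A B v x hx hA
end

section
/- Let τ₁,…,τₙ ≥ 0, c > 0, and let ψ : [0,∞) → [0,∞) be increasing, continuous, and bounded with ψ(0) = 0, obtained as ψ(x) = x·v(x) with v positive non-increasing. Define h : [0,∞) → (0,∞) by h(γ) = ( (1/n)·Σᵢ τᵢ·v(τᵢ·γ)/(1 + c·τᵢ·v(τᵢ·γ)·γ) )⁻¹ (with h(0) = (v(0)·(1/n)Σᵢτᵢ)⁻¹, assuming some τᵢ > 0). Then h is positive, non-decreasing (γ ≥ γ′ ⟹ h(γ) ≥ h(γ′)), and scalable: for every α > 1 and γ ≥ 0 with not all τᵢ = 0, α·h(γ) > h(α·γ). -/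
/-!
Write ψ(x) = x·v(x). Each summand g(γ) = τ·v(τγ)/(1 + c·ψ(τγ)) of the mean 1/h has a
non-increasing numerator and a non-decreasing denominator, so h is positive and non-decreasing.
For scalability, γ·g(γ) = φ(ψ(τγ)) with φ(t) = t/(1 + c·t), which is strictly increasing in γ
when τ > 0. Hence γ·g(γ) < αγ·g(αγ), i.e. g(γ) < α·g(αγ), and averaging and inverting gives
h(αγ) < α·h(γ).
-/

open Finset Set

def IsStandardInterference (h : ℝ → ℝ) : Prop :=
  (∀ γ ∈ Ici (0:ℝ), 0 < h γ) ∧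
    (∀ γ' ∈ Ici (0:ℝ), ∀ γ ∈ Ici (0:ℝ), γ' ≤ γ → h γ' ≤ h γ) ∧
    (∀ α > (1:ℝ), ∀ γ ∈ Ici (0:ℝ), h (α * γ) < α * h γ)

theorem isStandardInterference_of_eq_inv {F h : ℝ → ℝ} (hF_pos : ∀ γ ∈ Ici (0:ℝ), 0 < F γ)
    (hF_anti : AntitoneOn F (Ici 0))
    (hF_lt : ∀ α > (1:ℝ), ∀ γ > (0:ℝ), F γ < α * F (α * γ))
    (hh : ∀ γ ∈ Ici (0:ℝ), h γ = (F γ)⁻¹) : IsStandardInterference h := by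
  have h_pos : ∀ γ ∈ Ici (0:ℝ), 0 < h γ := fun γ hγ => by
    simpa only [hh γ hγ] using inv_pos.mpr (hF_pos γ hγ)
  refine ⟨h_pos, fun γ' hγ' γ hγ hle => ?_, fun α hα γ hγ => ?_⟩
  · rw [hh γ' hγ', hh γ hγ]
    exact inv_anti₀ (hF_pos γ hγ) (hF_anti hγ' hγ hle)
  · rcases (mem_Ici.mp hγ).eq_or_lt with rfl | hγ_pos
    · simpa only [mul_zero] using lt_mul_left (h_pos 0 hγ) hα
    have hαγ : α * γ ∈ Ici (0:ℝ) := mem_Ici.mpr (by positivity)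
    rw [hh _ hαγ, hh γ hγ, ← div_eq_mul_inv, lt_div_iff₀ (hF_pos γ hγ), ← div_eq_inv_mul,
      div_lt_iff₀ (hF_pos _ hαγ)]
    exact hF_lt α hα γ hγ_pos

theorem div_one_add_mul_lt_div_one_add_mul {c s t : ℝ} (hc : 0 ≤ c) (hs : 0 ≤ s) (hst : s < t) :
    s / (1 + c * s) < t / (1 + c * t) := by
  have ht : 0 ≤ t := hs.trans hst.le
  rw [div_lt_div_iff₀ (by positivity) (by positivity)]
  linarith

noncomputable def interferenceTerm (c : ℝ) (v : ℝ → ℝ) (τ γ : ℝ) : ℝ :=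
  τ * v (τ * γ) / (1 + c * τ * v (τ * γ) * γ)

section InterferenceTerm

variable {c τ : ℝ} {v : ℝ → ℝ}

theorem mul_interferenceTerm (γ : ℝ) :
    γ * interferenceTerm c v τ γ = τ * γ * v (τ * γ) / (1 + c * (τ * γ * v (τ * γ))) := by
  unfold interferenceTerm
  ring

variable (hc : 0 ≤ c) (hv : ∀ x ∈ Ici (0:ℝ), 0 < v x)
include hc hv

theorem interferenceTerm_nonneg (hτ : 0 ≤ τ) {γ : ℝ} (hγ : 0 ≤ γ) :
    0 ≤ interferenceTerm c v τ γ := by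
  have := hv (τ * γ) (mem_Ici.mpr (by positivity))
  unfold interferenceTerm
  positivity

theorem interferenceTerm_pos (hτ_pos : 0 < τ) {γ : ℝ} (hγ : 0 ≤ γ) :
    0 < interferenceTerm c v τ γ := by
  have := hv (τ * γ) (mem_Ici.mpr (by positivity))
  unfold interferenceTerm
  positivity

theorem interferenceTerm_antitoneOn (hτ : 0 ≤ τ) (hv_anti : AntitoneOn v (Ici 0))
    (hψ : MonotoneOn (fun x => x * v x) (Ici 0)) :
    AntitoneOn (interferenceTerm c v τ) (Ici 0) := by
  intro γ' hγ' γ hγ hle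
  have hγ'0 : 0 ≤ γ' := hγ'
  have hτγ' : τ * γ' ∈ Ici (0:ℝ) := mem_Ici.mpr (mul_nonneg hτ hγ'0)
  have hτγ : τ * γ ∈ Ici (0:ℝ) := mem_Ici.mpr (mul_nonneg hτ (hγ'0.trans hle))
  have hτle : τ * γ' ≤ τ * γ := mul_le_mul_of_nonneg_left hle hτ
  have hvγ' := hv _ hτγ'
  have hvγ := hv _ hτγ
  have hnum : τ * v (τ * γ) ≤ τ * v (τ * γ') :=
    mul_le_mul_of_nonneg_left (hv_anti hτγ' hτγ hτle) hτ
  have hden : 1 + c * τ * v (τ * γ') * γ' ≤ 1 + c * τ * v (τ * γ) * γ := by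
    linarith [mul_le_mul_of_nonneg_left (hψ hτγ' hτγ hτle) hc]
  exact div_le_div₀ (by positivity) hnum (by positivity) hden

theorem interferenceTerm_lt_mul (hψ : StrictMonoOn (fun x => x * v x) (Ici 0)) (hτ_pos : 0 < τ)
    {α γ : ℝ} (hα : 1 < α) (hγ : 0 < γ) :
    interferenceTerm c v τ γ < α * interferenceTerm c v τ (α * γ) := by
  have hτγ : τ * γ ∈ Ici (0:ℝ) := mem_Ici.mpr (by positivity)
  have hτγ_lt : τ * γ < τ * (α * γ) := by nlinarith [mul_pos hτ_pos hγ]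
  have hψ_nonneg : 0 ≤ τ * γ * v (τ * γ) := mul_nonneg hτγ (hv _ hτγ).le
  have hscaled : γ * interferenceTerm c v τ γ < α * γ * interferenceTerm c v τ (α * γ) := by
    rw [mul_interferenceTerm, mul_interferenceTerm]
    exact div_one_add_mul_lt_div_one_add_mul hc hψ_nonneg
      (hψ hτγ (mem_Ici.mpr (by positivity)) hτγ_lt)
  rw [show α * γ * interferenceTerm c v τ (α * γ) = γ * (α * interferenceTerm c v τ (α * γ)) by
    ring] at hscaled
  exact lt_of_mul_lt_mul_left hscaled hγ.le

end InterferenceTerm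

section Sum

variable {ι : Type*} [Fintype ι] {c : ℝ} {v : ℝ → ℝ} {τ : ι → ℝ}
  (hc : 0 ≤ c) (hτ : ∀ i, 0 ≤ τ i) (hv : ∀ x ∈ Ici (0:ℝ), 0 < v x)
include hc hτ hv

theorem sum_interferenceTerm_pos (hτ_ne : ∃ i, 0 < τ i) {γ : ℝ} (hγ : 0 ≤ γ) :
    0 < ∑ i, interferenceTerm c v (τ i) γ :=
  let ⟨i, hi⟩ := hτ_ne
  sum_pos' (fun j _ => interferenceTerm_nonneg hc hv (hτ j) hγ)
    ⟨i, mem_univ i, interferenceTerm_pos hc hv hi hγ⟩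

theorem antitoneOn_sum_interferenceTerm (hv_anti : AntitoneOn v (Ici 0))
    (hψ : MonotoneOn (fun x => x * v x) (Ici 0)) :
    AntitoneOn (fun γ => ∑ i, interferenceTerm c v (τ i) γ) (Ici 0) :=
  fun _ hγ' _ hγ hle => sum_le_sum fun i _ =>
    interferenceTerm_antitoneOn hc hv (hτ i) hv_anti hψ hγ' hγ hle

theorem sum_interferenceTerm_lt_mul (hτ_ne : ∃ i, 0 < τ i)
    (hψ : StrictMonoOn (fun x => x * v x) (Ici 0)) {α γ : ℝ} (hα : 1 < α) (hγ : 0 < γ) :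
    ∑ i, interferenceTerm c v (τ i) γ < α * ∑ i, interferenceTerm c v (τ i) (α * γ) := by
  obtain ⟨i₀, hi₀⟩ := hτ_ne
  have hterm_le : ∀ i, interferenceTerm c v (τ i) γ ≤ α * interferenceTerm c v (τ i) (α * γ) := by
    intro i
    rcases (hτ i).eq_or_lt with hτi | hτi
    · simp [interferenceTerm, ← hτi]
    · exact (interferenceTerm_lt_mul hc hv hψ hτi hα hγ).le
  rw [mul_sum]
  exact sum_lt_sum (fun i _ => hterm_le i)
    ⟨i₀, mem_univ i₀, interferenceTerm_lt_mul hc hv hψ hi₀ hα hγ⟩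

end Sum

theorem stmt_10_general (n : ℕ) (τ : Fin n → ℝ) (hτ : ∀ i, 0 ≤ τ i)
    (hτne : ∃ i, 0 < τ i) (c : ℝ) (hc : 0 < c)
    (v : ℝ → ℝ) (hv : ∀ x ∈ Set.Ici (0:ℝ), 0 < v x)
    (hvmono : AntitoneOn v (Set.Ici 0))
    (hψmono : StrictMonoOn (fun x => x * v x) (Set.Ici 0))
    (h : ℝ → ℝ)
    (hh : ∀ γ ∈ Set.Ici (0:ℝ),
      h γ = ((1 / (n:ℝ)) * ∑ i, τ i * v (τ i * γ) / (1 + c * τ i * v (τ i * γ) * γ))⁻¹) :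
    (∀ γ ∈ Set.Ici (0:ℝ), 0 < h γ) ∧
      (∀ γ' ∈ Set.Ici (0:ℝ), ∀ γ ∈ Set.Ici (0:ℝ), γ' ≤ γ → h γ' ≤ h γ) ∧
      (∀ α > (1:ℝ), ∀ γ ∈ Set.Ici (0:ℝ), h (α * γ) < α * h γ) := by
  have hn : 0 < 1 / (n:ℝ) := one_div_pos.mpr (Nat.cast_pos.mpr hτne.choose.pos)
  refine isStandardInterference_of_eq_inv
    (F := fun γ => 1 / (n:ℝ) * ∑ i, interferenceTerm c v (τ i) γ) ?_ ?_ ?_ hh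
  · exact fun γ hγ => mul_pos hn (sum_interferenceTerm_pos hc.le hτ hv hτne hγ)
  · exact fun γ' hγ' γ hγ hle => mul_le_mul_of_nonneg_left
      (antitoneOn_sum_interferenceTerm hc.le hτ hv hvmono hψmono.monotoneOn hγ' hγ hle) hn.le
  · intro α hα γ hγ
    rw [mul_left_comm]
    exact mul_lt_mul_of_pos_left (sum_interferenceTerm_lt_mul hc.le hτ hv hτne hψmono hα hγ) hn

/-- the interference function
h(γ) = ((1/n)Σᵢ τᵢ v(τᵢγ)/(1 + c τᵢ v(τᵢγ) γ))⁻¹ is positive, non-decreasing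
and scalable (α·h(γ) > h(α·γ) for α > 1). -/
theorem stmt_10 (n : ℕ) (hn : 0 < n) (τ : Fin n → ℝ) (hτ : ∀ i, 0 ≤ τ i)
    (hτne : ∃ i, 0 < τ i) (c : ℝ) (hc : 0 < c)
    (v : ℝ → ℝ) (hv : ∀ x ∈ Set.Ici (0:ℝ), 0 < v x)
    (hvmono : AntitoneOn v (Set.Ici 0)) (hvcont : ContinuousOn v (Set.Ici 0))
    (hψmono : StrictMonoOn (fun x => x * v x) (Set.Ici 0))
    (hψbdd : BddAbove ((fun x => x * v x) '' Set.Ici 0))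
    (h : ℝ → ℝ)
    (hh : ∀ γ ∈ Set.Ici (0:ℝ),
      h γ = ((1 / (n:ℝ)) * ∑ i, τ i * v (τ i * γ) / (1 + c * τ i * v (τ i * γ) * γ))⁻¹) :
    (∀ γ ∈ Set.Ici (0:ℝ), 0 < h γ) ∧
      (∀ γ' ∈ Set.Ici (0:ℝ), ∀ γ ∈ Set.Ici (0:ℝ), γ' ≤ γ → h γ' ≤ h γ) ∧
      (∀ α > (1:ℝ), ∀ γ ∈ Set.Ici (0:ℝ), h (α * γ) < α * h γ) :=
  stmt_10_general n τ hτ hτne c hc v hv hvmono hψmono h hh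
end

section
/- Let h : [0,∞) → [0,∞) be continuous, positive, non-decreasing, and scalable (α·h(γ) > h(α·γ) for every α > 1 and γ ≥ 0 with h(γ) > 0), and suppose there exists γ₀ > 0 with h(γ₀) < γ₀ (feasibility). Then there exists a unique γ* > 0 with h(γ*) = γ*, and for any γ⁽⁰⁾ ≥ 0 the iterates γ⁽ᵗ⁺¹⁾ = h(γ⁽ᵗ⁾) converge to γ*. -/
/-!
Applying the intermediate value theorem to `h x - x` on `[0, γ₀]` gives a fixed point `p > 0`.
Scalability with `α = p / x`, resp. `α = x / p`, shows `x < h x` on `(0, p)` and `h x < x` on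
`(p, ∞)`, so `p` is the only positive fixed point. By monotonicity the orbit of any `x ≥ 0` is
monotone and stays on the side of `p` where it starts; its limit is a fixed point `≥ 0`, hence
positive because `h > 0`, hence equal to `p`.
-/

open Filter Function Set Topology

section Iteration

variable {α : Type*} {f : α → α} {s : Set α} {x p y : α}

theorem isFixedPt_of_tendsto_iterate_of_continuousWithinAt [TopologicalSpace α] [T2Space α]
    (hy : Tendsto (fun n => f^[n] x) atTop (𝓝 y)) (hf : ContinuousWithinAt f s y)
    (hmaps : MapsTo f s s) (hx : x ∈ s) : IsFixedPt f y := by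
  refine tendsto_nhds_unique ((tendsto_add_atTop_iff_nat 1).1 ?_) hy
  simp only [iterate_succ' f]
  exact hf.tendsto.comp (tendsto_nhdsWithin_iff.2 ⟨hy, .of_forall fun n => hmaps.iterate n hx⟩)

theorem MonotoneOn.monotone_iterate_of_le_map [Preorder α] (hf : MonotoneOn f s)
    (hmaps : MapsTo f s s) (hx : x ∈ s) (hxf : x ≤ f x) : Monotone fun n => f^[n] x := by
  refine monotone_nat_of_le_succ fun n => ?_
  induction n with
  | zero => exact hxf
  | succ n ih =>
    rw [iterate_succ_apply' f n, iterate_succ_apply' f (n + 1)]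
    exact hf (hmaps.iterate n hx) (hmaps.iterate (n + 1) hx) ih

theorem MonotoneOn.iterate_le_of_isFixedPt [Preorder α] (hf : MonotoneOn f s)
    (hmaps : MapsTo f s s) (hx : x ∈ s) (hp : p ∈ s) (hfp : IsFixedPt f p) (hxp : x ≤ p)
    (n : ℕ) : f^[n] x ≤ p := by
  induction n with
  | zero => exact hxp
  | succ n ih =>
    rw [iterate_succ_apply', ← hfp.eq]
    exact hf (hmaps.iterate n hx) hp ih

theorem MonotoneOn.exists_tendsto_iterate_isFixedPt_of_le_map [ConditionallyCompleteLinearOrder α]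
    [TopologicalSpace α] [OrderTopology α] (hf : MonotoneOn f s)
    (hmaps : MapsTo f s s) (hcont : ContinuousOn f s) (hs : s.OrdConnected) (hx : x ∈ s)
    (hxf : x ≤ f x) (hp : p ∈ s) (hfp : IsFixedPt f p) (hxp : x ≤ p) :
    ∃ y ∈ Icc x p, IsFixedPt f y ∧ Tendsto (fun n => f^[n] x) atTop (𝓝 y) := by
  have hbdd : BddAbove (range fun n => f^[n] x) :=
    ⟨p, forall_mem_range.2 (hf.iterate_le_of_isFixedPt hmaps hx hp hfp hxp)⟩
  have hmem : ⨆ n, f^[n] x ∈ Icc x p :=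
    ⟨le_ciSup hbdd 0, ciSup_le (hf.iterate_le_of_isFixedPt hmaps hx hp hfp hxp)⟩
  have hlim := tendsto_atTop_ciSup (hf.monotone_iterate_of_le_map hmaps hx hxf) hbdd
  exact ⟨_, hmem, isFixedPt_of_tendsto_iterate_of_continuousWithinAt hlim
    (hcont _ (hs.out hx hp hmem)) hmaps hx, hlim⟩

theorem MonotoneOn.exists_tendsto_iterate_isFixedPt_of_map_le [ConditionallyCompleteLinearOrder α]
    [TopologicalSpace α] [OrderTopology α] (hf : MonotoneOn f s)
    (hmaps : MapsTo f s s) (hcont : ContinuousOn f s) (hs : s.OrdConnected) (hx : x ∈ s)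
    (hxf : f x ≤ x) (hp : p ∈ s) (hfp : IsFixedPt f p) (hpx : p ≤ x) :
    ∃ y ∈ Icc p x, IsFixedPt f y ∧ Tendsto (fun n => f^[n] x) atTop (𝓝 y) := by
  obtain ⟨y, hy, hfy, hlim⟩ := MonotoneOn.exists_tendsto_iterate_isFixedPt_of_le_map
    (α := αᵒᵈ) hf.dual hmaps hcont hs.dual hx hxf hp hfp hpx
  exact ⟨OrderDual.ofDual y, ⟨hy.2, hy.1⟩, hfy, hlim⟩

end Iteration

def Scalable (h : ℝ → ℝ) : Prop :=
  ∀ α > (1:ℝ), ∀ γ ∈ Ici (0:ℝ), 0 < h γ → h (α * γ) < α * h γ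

namespace Scalable

variable {h : ℝ → ℝ} {x p : ℝ}

theorem lt_apply_of_lt_isFixedPt (hs : Scalable h) (hx : 0 < x) (hhx : 0 < h x) (hxp : x < p)
    (hp : IsFixedPt h p) : x < h x := by
  have key := hs (p / x) ((one_lt_div hx).2 hxp) x hx.le hhx
  rw [div_mul_cancel₀ p hx.ne', hp.eq, div_mul_eq_mul_div, lt_div_iff₀ hx] at key
  nlinarith

theorem apply_lt_of_isFixedPt_lt (hs : Scalable h) (hp0 : 0 < p) (hp : IsFixedPt h p)
    (hpx : p < x) : h x < x := by
  have key := hs (x / p) ((one_lt_div hp0).2 hpx) p hp0.le (hp0.trans_eq hp.eq.symm)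
  rwa [div_mul_cancel₀ x hp0.ne', hp.eq, div_mul_cancel₀ x hp0.ne'] at key

theorem le_apply_of_le_isFixedPt (hs : Scalable h) (hpos : ∀ γ ∈ Ici (0:ℝ), 0 < h γ)
    (hx : 0 ≤ x) (hxp : x ≤ p) (hp : IsFixedPt h p) : x ≤ h x := by
  obtain rfl | hx := hx.eq_or_lt
  · exact (hpos 0 self_mem_Ici).le
  obtain rfl | hxp := hxp.eq_or_lt
  · exact hp.ge
  exact (hs.lt_apply_of_lt_isFixedPt hx (hpos x hx.le) hxp hp).le

theorem apply_le_of_isFixedPt_le (hs : Scalable h) (hp0 : 0 < p) (hp : IsFixedPt h p)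
    (hpx : p ≤ x) : h x ≤ x := by
  obtain rfl | hpx := hpx.eq_or_lt
  · exact hp.le
  exact (hs.apply_lt_of_isFixedPt_lt hp0 hp hpx).le

theorem isFixedPt_unique (hs : Scalable h) {q : ℝ} (hp0 : 0 < p) (hq0 : 0 < q)
    (hp : IsFixedPt h p) (hq : IsFixedPt h q) : p = q := by
  rcases lt_trichotomy p q with hpq | rfl | hqp
  · exact absurd hp.eq (hs.lt_apply_of_lt_isFixedPt hp0 (hp0.trans_eq hp.eq.symm) hpq hq).ne'
  · rfl
  · exact absurd hp.eq (hs.apply_lt_of_isFixedPt_lt hq0 hq hqp).ne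

theorem tendsto_iterate_of_isFixedPt (hs : Scalable h) (hpos : ∀ γ ∈ Ici (0:ℝ), 0 < h γ)
    (hmono : MonotoneOn h (Ici 0)) (hcont : ContinuousOn h (Ici 0)) (hp0 : 0 < p)
    (hp : IsFixedPt h p) (hx : 0 ≤ x) : Tendsto (h^[·] x) atTop (𝓝 p) := by
  have hmaps : MapsTo h (Ici 0) (Ici 0) := fun γ hγ => (hpos γ hγ).le
  obtain ⟨y, hy, hfy, hlim⟩ :
      ∃ y ∈ Ici 0, IsFixedPt h y ∧ Tendsto (h^[·] x) atTop (𝓝 y) := by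
    rcases le_total x p with hxp | hpx
    · obtain ⟨y, hy, hfy, hlim⟩ := hmono.exists_tendsto_iterate_isFixedPt_of_le_map hmaps hcont
        ordConnected_Ici hx (hs.le_apply_of_le_isFixedPt hpos hx hxp hp) hp0.le hp hxp
      exact ⟨y, hx.trans hy.1, hfy, hlim⟩
    · obtain ⟨y, hy, hfy, hlim⟩ := hmono.exists_tendsto_iterate_isFixedPt_of_map_le hmaps hcont
        ordConnected_Ici hx (hs.apply_le_of_isFixedPt_le hp0 hp hpx) hp0.le hp hpx
      exact ⟨y, hp0.le.trans hy.1, hfy, hlim⟩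
  rwa [hs.isFixedPt_unique ((hpos y hy).trans_eq hfy.eq) hp0 hfy hp] at hlim

end Scalable

/-- Yates: a continuous, positive, non-decreasing, scalable
function h with a feasible point has a unique positive fixed point, and the
fixed-point iteration converges to it from any nonnegative starting point. -/
theorem stmt_11 (h : ℝ → ℝ)
    (hcont : ContinuousOn h (Set.Ici 0))
    (hpos : ∀ γ ∈ Set.Ici (0:ℝ), 0 < h γ)
    (hmono : ∀ γ' ∈ Set.Ici (0:ℝ), ∀ γ ∈ Set.Ici (0:ℝ), γ' ≤ γ → h γ' ≤ h γ)
    (hscal : ∀ α > (1:ℝ), ∀ γ ∈ Set.Ici (0:ℝ), 0 < h γ → h (α * γ) < α * h γ)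
    (hfeas : ∃ γ₀ > (0:ℝ), h γ₀ < γ₀) :
    ∃ γs > (0:ℝ), h γs = γs ∧ (∀ γ' > (0:ℝ), h γ' = γ' → γ' = γs) ∧
      ∀ γ₀ ∈ Set.Ici (0:ℝ), Tendsto (fun t => h^[t] γ₀) atTop (nhds γs) := by
  have hs : Scalable h := hscal
  obtain ⟨b, hb, hfb⟩ := hfeas
  obtain ⟨p, hp, hfix⟩ := exists_mem_Icc_isFixedPt (hcont.mono Icc_subset_Ici_self) hb.le
    (hpos 0 self_mem_Ici).le hfb.le
  have hp0 : 0 < p := (hpos p hp.1).trans_eq hfix.eq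
  exact ⟨p, hp0, hfix, fun q hq0 hq => hs.isFixedPt_unique hq0 hp0 hq hfix,
    fun γ₀ hγ₀ => hs.tendsto_iterate_of_isFixedPt hpos hmono hcont hp0 hfix hγ₀⟩
end

section
/- Let τ₁,…,τₙ ≥ 0, c ∈ (0,1), ψ as above, and suppose γ_N > 0 and γ_N^η > 0 satisfy 1 = (1/n)·Σ_{i=1}^n ψ(τᵢ·γ_N)/(1 + c·ψ(τᵢ·γ_N)) and 1 = (1/n)·Σ_{i ∈ S} ψ(τᵢ·γ_N^η)/(1 + c·ψ(τᵢ·γ_N^η)) for some subset S ⊆ {1,…,n}. Then γ_N ≤ γ_N^η. -/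
open Finset

/-!
Both equations say that `γ ↦ ∑ i, f (τ i * γ)`, with `f t = ψ t / (1 + c ψ t)`, takes a value at
least `n` at the respective solution: exactly `n` at `γN`, and at least `n` at `γNη` because
dropping the indices outside `S` only loses nonnegative terms. Since `f` is strictly increasing and
some `τ i` is positive (otherwise the full sum would vanish), this function of `γ` is strictly
increasing, so `γN ≤ γNη`.
-/

theorem eq_of_one_eq_one_div_mul {K : Type*} [DivisionRing K] {a b : K} (h : 1 = 1 / a * b) :
    b = a := by
  have ha : a ≠ 0 := by
    rintro rfl
    simp at h
  rwa [one_div, eq_comm, inv_mul_eq_one₀ ha, eq_comm] at h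

theorem strictMonoOn_div_one_add_mul {c : ℝ} (hc : 0 ≤ c) :
    StrictMonoOn (fun t : ℝ => t / (1 + c * t)) (Set.Ici 0) := by
  intro s hs t ht hst
  simp only [Set.mem_Ici] at hs ht
  rw [div_lt_div_iff₀ (by positivity) (by positivity)]
  linarith

theorem StrictMonoOn.div_one_add_mul {s : Set ℝ} {ψ : ℝ → ℝ} (hψ : StrictMonoOn ψ s)
    (hψnonneg : ∀ x ∈ s, 0 ≤ ψ x) {c : ℝ} (hc : 0 ≤ c) :
    StrictMonoOn (fun x => ψ x / (1 + c * ψ x)) s :=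
  (strictMonoOn_div_one_add_mul hc).comp hψ hψnonneg

theorem StrictMonoOn.sum_comp_mul {ι : Type*} [Fintype ι] {f : ℝ → ℝ}
    (hf : StrictMonoOn f (Set.Ici 0)) {τ : ι → ℝ} (hτ : ∀ i, 0 ≤ τ i) {j : ι} (hj : 0 < τ j) :
    StrictMonoOn (fun γ => ∑ i, f (τ i * γ)) (Set.Ici 0) := by
  intro a ha b hb hab
  simp only [Set.mem_Ici] at ha hb
  refine Finset.sum_lt_sum (fun i _ => ?_) ⟨j, mem_univ j, ?_⟩
  · exact hf.monotoneOn (mul_nonneg (hτ i) ha) (mul_nonneg (hτ i) hb)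
      (mul_le_mul_of_nonneg_left hab.le (hτ i))
  · exact hf (mul_nonneg hj.le ha) (mul_nonneg hj.le hb) (mul_lt_mul_of_pos_left hab hj)

theorem exists_pos_of_sum_comp_mul_ne_zero {ι : Type*} [Fintype ι] {f : ℝ → ℝ} (hf0 : f 0 = 0)
    {τ : ι → ℝ} (hτ : ∀ i, 0 ≤ τ i) {γ : ℝ} (h : ∑ i, f (τ i * γ) ≠ 0) : ∃ j, 0 < τ j := by
  obtain ⟨j, -, hj⟩ := Finset.exists_ne_zero_of_sum_ne_zero h
  refine ⟨j, (hτ j).lt_of_ne' fun hτj => hj ?_⟩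
  rw [hτj, zero_mul, hf0]

theorem stmt_13_general (n : ℕ) (τ : Fin n → ℝ) (hτ : ∀ i, 0 ≤ τ i)
    (c : ℝ) (hc0 : 0 < c)
    (ψ : ℝ → ℝ) (hψmono : StrictMonoOn ψ (Set.Ici 0))
    (hψ0 : ψ 0 = 0)
    (hψnonneg : ∀ x ∈ Set.Ici (0:ℝ), 0 ≤ ψ x)
    (S : Finset (Fin n)) (γN γNη : ℝ) (hγN : 0 < γN) (hγNη : 0 < γNη)
    (heqN : 1 = (1 / (n:ℝ)) * ∑ i, ψ (τ i * γN) / (1 + c * ψ (τ i * γN)))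
    (heqNη : 1 = (1 / (n:ℝ)) * ∑ i ∈ S, ψ (τ i * γNη) / (1 + c * ψ (τ i * γNη))) :
    γN ≤ γNη := by
  set f : ℝ → ℝ := fun x => ψ x / (1 + c * ψ x)
  have hf : StrictMonoOn f (Set.Ici 0) := hψmono.div_one_add_mul hψnonneg hc0.le
  have hf0 : f 0 = 0 := by simp [f, hψ0]
  have hsumN := eq_of_one_eq_one_div_mul heqN
  have hsumS := eq_of_one_eq_one_div_mul heqNη
  have hn : (n : ℝ) ≠ 0 := by
    rintro hn
    simp [hn] at heqN
  obtain ⟨j, hj⟩ := exists_pos_of_sum_comp_mul_ne_zero hf0 hτ (hsumN.trans_ne hn)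
  have hle : ∑ i, f (τ i * γN) ≤ ∑ i, f (τ i * γNη) := by
    rw [hsumN, ← hsumS]
    refine Finset.sum_le_sum_of_subset_of_nonneg (subset_univ S) fun i _ _ => ?_
    have hx : 0 ≤ τ i * γNη := mul_nonneg (hτ i) hγNη.le
    exact hf0 ▸ hf.monotoneOn Set.self_mem_Ici hx hx
  exact ((hf.sum_comp_mul hτ hj).le_iff_le hγN.le hγNη.le).1 hle

/-- the solution of the S-restricted fixed-point equation
dominates the solution of the full one: γ_N ≤ γ_N^η. -/
theorem stmt_13 (n : ℕ) (τ : Fin n → ℝ) (hτ : ∀ i, 0 ≤ τ i)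
    (c : ℝ) (hc0 : 0 < c) (hc1 : c < 1)
    (ψ : ℝ → ℝ) (hψmono : StrictMonoOn ψ (Set.Ici 0))
    (hψcont : ContinuousOn ψ (Set.Ici 0)) (hψ0 : ψ 0 = 0)
    (hψnonneg : ∀ x ∈ Set.Ici (0:ℝ), 0 ≤ ψ x)
    (S : Finset (Fin n)) (γN γNη : ℝ) (hγN : 0 < γN) (hγNη : 0 < γNη)
    (heqN : 1 = (1 / (n:ℝ)) * ∑ i, ψ (τ i * γN) / (1 + c * ψ (τ i * γN)))
    (heqNη : 1 = (1 / (n:ℝ)) * ∑ i ∈ S, ψ (τ i * γNη) / (1 + c * ψ (τ i * γNη))) :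
    γN ≤ γNη :=
  stmt_13_general n τ hτ c hc0 ψ hψmono hψ0 hψnonneg S γN γNη hγN hγNη heqN heqNη
end

section
/- Let ψ, c, τᵢ, γ_N, γ_N^η, S be as in the previous statement with γ_N ≤ γ_N^η, and let ψ_∞ = sup ψ. Then (1/n)·Σ_{i ∉ S} ψ(τᵢ·γ_N)/(1 + c·ψ(τᵢ·γ_N)) = (1/n)·Σ_{i ∈ S} (ψ(τᵢ·γ_N^η) − ψ(τᵢ·γ_N)) / ((1 + c·ψ(τᵢ·γ_N))·(1 + c·ψ(τᵢ·γ_N^η))) and this quantity is at least (1/(1 + c·ψ_∞)²)·(1/n)·Σ_{i ∈ S} (ψ(τᵢ·γ_N^η) − ψ(τᵢ·γ_N)). -/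
open Finset

/-!
Subtracting the full fixed-point equation from the restricted one leaves the complementary sum on
one side and, termwise over `S`, differences `b/(1 + c b) - a/(1 + c a)` on the other. Each such
difference equals `(b - a)/((1 + c a)(1 + c b))`, and since `0 ≤ a ≤ b ≤ ψ_∞` by monotonicity of `ψ`,
the denominator is at most `(1 + c ψ_∞)²`.
-/

lemma mul_sum_compl_eq_mul_sum_sub {ι : Type*} [Fintype ι] [DecidableEq ι] (S : Finset ι)
    (k : ℝ) (f g : ι → ℝ) (h : k * ∑ i, f i = k * ∑ i ∈ S, g i) :
    k * ∑ i ∈ Sᶜ, f i = k * ∑ i ∈ S, (g i - f i) := by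
  rw [sum_sub_distrib, mul_sub, ← h, ← sum_compl_add_sum S f]
  ring

lemma div_one_add_mul_sub_div_one_add_mul {c a b : ℝ} (ha : 1 + c * a ≠ 0) (hb : 1 + c * b ≠ 0) :
    b / (1 + c * b) - a / (1 + c * a) = (b - a) / ((1 + c * a) * (1 + c * b)) := by
  rw [div_sub_div _ _ hb ha]
  ring

lemma sub_div_one_add_mul_sq_le {c a b M : ℝ} (hc : 0 ≤ c) (ha : 0 ≤ a) (hab : a ≤ b)
    (hbM : b ≤ M) :
    (b - a) / (1 + c * M) ^ 2 ≤ (b - a) / ((1 + c * a) * (1 + c * b)) := by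
  have hca : 0 ≤ c * a := mul_nonneg hc ha
  have hcb : c * a ≤ c * b := mul_le_mul_of_nonneg_left hab hc
  have hcM : c * b ≤ c * M := mul_le_mul_of_nonneg_left hbM hc
  apply div_le_div_of_nonneg_left (sub_nonneg.mpr hab) (mul_pos (by linarith) (by linarith))
  rw [sq]
  exact mul_le_mul (by linarith) (by linarith) (by linarith) (by linarith)

theorem stmt_14_general (n : ℕ) (τ : Fin n → ℝ) (hτ : ∀ i, 0 ≤ τ i)
    (c ψinf : ℝ) (hc : 0 < c)
    (ψ : ℝ → ℝ) (hψmono : StrictMonoOn ψ (Set.Ici 0))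
    (hψnonneg : ∀ x ∈ Set.Ici (0:ℝ), 0 ≤ ψ x)
    (hψsup : IsLUB (ψ '' Set.Ici 0) ψinf)
    (S : Finset (Fin n)) (γN γNη : ℝ) (hγN : 0 < γN)
    (hle : γN ≤ γNη)
    (heqN : 1 = (1 / (n:ℝ)) * ∑ i, ψ (τ i * γN) / (1 + c * ψ (τ i * γN)))
    (heqNη : 1 = (1 / (n:ℝ)) * ∑ i ∈ S, ψ (τ i * γNη) / (1 + c * ψ (τ i * γNη))) :
    (1 / (n:ℝ)) * ∑ i ∈ Sᶜ, ψ (τ i * γN) / (1 + c * ψ (τ i * γN))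
        = (1 / (n:ℝ)) * ∑ i ∈ S, (ψ (τ i * γNη) - ψ (τ i * γN))
            / ((1 + c * ψ (τ i * γN)) * (1 + c * ψ (τ i * γNη))) ∧
      (1 / (n:ℝ)) * ∑ i ∈ Sᶜ, ψ (τ i * γN) / (1 + c * ψ (τ i * γN))
        ≥ (1 / (1 + c * ψinf) ^ 2) *
            ((1 / (n:ℝ)) * ∑ i ∈ S, (ψ (τ i * γNη) - ψ (τ i * γN))) := by
  have hN : ∀ i, τ i * γN ∈ Set.Ici 0 := fun i => mul_nonneg (hτ i) hγN.le
  have hNη : ∀ i, τ i * γNη ∈ Set.Ici 0 := fun i => mul_nonneg (hτ i) (hγN.le.trans hle)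
  have hψN : ∀ i, 0 ≤ ψ (τ i * γN) := fun i => hψnonneg _ (hN i)
  have hψ_le : ∀ i, ψ (τ i * γN) ≤ ψ (τ i * γNη) := fun i =>
    hψmono.monotoneOn (hN i) (hNη i) (mul_le_mul_of_nonneg_left hle (hτ i))
  have hψNη_le : ∀ i, ψ (τ i * γNη) ≤ ψinf := fun i => hψsup.1 ⟨_, hNη i, rfl⟩
  have hden : ∀ x ∈ Set.Ici (0:ℝ), 1 + c * ψ x ≠ 0 := fun x hx =>
    (add_pos_of_pos_of_nonneg one_pos (mul_nonneg hc.le (hψnonneg x hx))).ne'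
  have hid := mul_sum_compl_eq_mul_sum_sub S _ _ _ (heqN.symm.trans heqNη)
  rw [sum_congr rfl fun i _ =>
    div_one_add_mul_sub_div_one_add_mul (hden _ (hN i)) (hden _ (hNη i))] at hid
  refine ⟨hid, ?_⟩
  rw [hid, ge_iff_le, mul_left_comm, mul_sum]
  gcongr with i
  rw [one_div_mul_eq_div]
  exact sub_div_one_add_mul_sq_le hc.le (hψN i) (hψ_le i) (hψNη_le i)

/-- identity and lower bound for the complementary sum. -/
theorem stmt_14 (n : ℕ) (τ : Fin n → ℝ) (hτ : ∀ i, 0 ≤ τ i)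
    (c ψinf : ℝ) (hc : 0 < c)
    (ψ : ℝ → ℝ) (hψmono : StrictMonoOn ψ (Set.Ici 0)) (hψ0 : ψ 0 = 0)
    (hψnonneg : ∀ x ∈ Set.Ici (0:ℝ), 0 ≤ ψ x)
    (hψsup : IsLUB (ψ '' Set.Ici 0) ψinf)
    (S : Finset (Fin n)) (γN γNη : ℝ) (hγN : 0 < γN) (hγNη : 0 < γNη)
    (hle : γN ≤ γNη)
    (heqN : 1 = (1 / (n:ℝ)) * ∑ i, ψ (τ i * γN) / (1 + c * ψ (τ i * γN)))
    (heqNη : 1 = (1 / (n:ℝ)) * ∑ i ∈ S, ψ (τ i * γNη) / (1 + c * ψ (τ i * γNη))) :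
    (1 / (n:ℝ)) * ∑ i ∈ Sᶜ, ψ (τ i * γN) / (1 + c * ψ (τ i * γN))
        = (1 / (n:ℝ)) * ∑ i ∈ S, (ψ (τ i * γNη) - ψ (τ i * γN))
            / ((1 + c * ψ (τ i * γN)) * (1 + c * ψ (τ i * γNη))) ∧
      (1 / (n:ℝ)) * ∑ i ∈ Sᶜ, ψ (τ i * γN) / (1 + c * ψ (τ i * γN))
        ≥ (1 / (1 + c * ψinf) ^ 2) *
            ((1 / (n:ℝ)) * ∑ i ∈ S, (ψ (τ i * γNη) - ψ (τ i * γN))) :=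
  stmt_14_general n τ hτ c ψinf hc ψ hψmono hψnonneg hψsup S γN γNη hγN hle heqN heqNη
end
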